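/- Let a > 1 be real and n a positive multiple of 4. Define λ : {ζ ∈ ℂ : ζ^n = 1} → ℝ by λ(ζ) = ∑_{g=0}^{n−1} a^{−δ(g)} ζ^g where δ(g) = min(g, n−g). Then λ(ζ) > 0 for all ζ, and λ has a unique minimum at ζ = −1. Explicitly, λ(ζ) = (1 ∓ a^{−n/2})·(1 − a^{−2})/|1 − a^{−1}ζ|², where the sign is − if ζ^{n/2} = 1 and + if ζ^{n/2} = −1. -/

import Mathlib

/-!
Splitting the sum at `g = m = n / 2` writes `λ(ζ)` as a geometric sum in `x = ζ / a` plus one in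
`y = ζ⁻¹ / a`. Since `x ^ m = y ^ m` and `x y = a⁻²`, multiplying by
`(1 - x) (1 - y) = ‖1 - ζ / a‖²` telescopes to `(1 - a⁻²) (1 - a⁻ᵐ ζ ^ m)` with `ζ ^ m = ±1`.
At `ζ = -1` the numerator takes its smaller value because `m` is even, while the denominator
`‖1 - ζ / a‖² = (1 + a⁻¹)² - a⁻¹ ‖1 + ζ‖²` is strictly largest there.
-/

open Finset Complex

theorem geom_sum_add_geom_sum_mul_eq {R : Type*} [CommRing R] {x y : R} {m : ℕ}
    (h : x ^ m = y ^ m) :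
    ((∑ i ∈ range (m + 1), x ^ i) + (∑ i ∈ range m, y ^ i) - 1) * ((1 - x) * (1 - y)) =
      (1 - x * y) * (1 - x ^ m) := by
  linear_combination (1 - y) * geom_sum_mul_neg x (m + 1) + (1 - x) * geom_sum_mul_neg y m
    + (1 - x) * h

section Field

variable {K : Type*} [Field K] {ζ : K} {m : ℕ}

theorem pow_sub_eq_inv_pow (hζ : ζ ^ m = 1) {j : ℕ} (hj : j ≤ m) : ζ ^ (m - j) = ζ⁻¹ ^ j := by
  rcases eq_or_ne m 0 with rfl | hm
  · simp_all
  rw [pow_sub₀ ζ (ne_zero_pow hm (hζ ▸ one_ne_zero)) hj, hζ, one_mul, inv_pow]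

theorem sum_pow_min_mul_pow_eq (b : K) (hζ : ζ ^ (2 * m) = 1) :
    ∑ g ∈ range (2 * m), b ^ min g (2 * m - g) * ζ ^ g =
      (∑ i ∈ range (m + 1), (b * ζ) ^ i) + (∑ i ∈ range m, (b * ζ⁻¹) ^ i) - 1 := by
  rcases Nat.eq_zero_or_pos m with rfl | hm
  · simp
  have hlow : ∑ g ∈ range (m + 1), b ^ min g (2 * m - g) * ζ ^ g =
      ∑ i ∈ range (m + 1), (b * ζ) ^ i :=
    sum_congr rfl fun g hg => by
      rw [min_eq_left (by rw [mem_range] at hg; omega), mul_pow]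
  have hhigh : ∑ g ∈ Ico (m + 1) (2 * m), b ^ min g (2 * m - g) * ζ ^ g =
      ∑ i ∈ range m, (b * ζ⁻¹) ^ i - 1 := by
    have hreflect := sum_Ico_reflect (fun g => b ^ min g (2 * m - g) * ζ ^ g) 1
      (show m ≤ 2 * m + 1 by omega)
    rw [show 2 * m + 1 - m = m + 1 by omega, show 2 * m + 1 - 1 = 2 * m by omega] at hreflect
    rw [← hreflect, range_eq_Ico, sum_eq_sum_Ico_succ_bot hm, pow_zero, add_sub_cancel_left]
    refine sum_congr rfl fun j hj => ?_
    rw [mem_Ico] at hj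
    rw [min_eq_right (by omega), Nat.sub_sub_self (by omega), pow_sub_eq_inv_pow hζ (by omega),
      mul_pow]
  rw [← sum_range_add_sum_Ico _ (show m + 1 ≤ 2 * m by omega), hlow, hhigh, add_sub_assoc]

theorem sum_pow_min_mul_pow_mul_eq (b : K) (hζ : ζ ^ (2 * m) = 1) :
    (∑ g ∈ range (2 * m), b ^ min g (2 * m - g) * ζ ^ g) * ((1 - b * ζ) * (1 - b * ζ⁻¹)) =
      (1 - b ^ 2) * (1 - b ^ m * ζ ^ m) := by
  rcases eq_or_ne m 0 with rfl | hm
  · simp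
  have hζ0 : ζ ≠ 0 := ne_zero_pow (by omega) (hζ ▸ one_ne_zero)
  have hpow : (b * ζ) ^ m = (b * ζ⁻¹) ^ m := by
    rw [mul_pow, mul_pow, ← pow_sub_eq_inv_pow hζ (by omega), show 2 * m - m = m by omega]
  rw [sum_pow_min_mul_pow_eq b hζ, geom_sum_add_geom_sum_mul_eq hpow, mul_pow,
    mul_mul_mul_comm, mul_inv_cancel₀ hζ0, sq, mul_one]

end Field

namespace Complex

theorem one_sub_mul_mul_one_sub_mul_inv {ζ : ℂ} (hζ : ‖ζ‖ = 1) (b : ℝ) :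
    (1 - b * ζ) * (1 - b * ζ⁻¹) = ((‖1 - b * ζ‖ ^ 2 : ℝ) : ℂ) := by
  have h := mul_conj' (1 - b * ζ)
  rw [map_sub, map_one, map_mul, conj_ofReal, ← inv_eq_conj hζ] at h
  exact_mod_cast h

theorem norm_one_sub_mul_sq_add {ζ : ℂ} (hζ : ‖ζ‖ = 1) (b : ℝ) :
    ‖1 - b * ζ‖ ^ 2 + b * ‖1 + ζ‖ ^ 2 = (1 + b) ^ 2 := by
  have hunit : ζ.re * ζ.re + ζ.im * ζ.im = 1 := by
    rw [← normSq_apply, ← Complex.sq_norm, hζ, one_pow]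
  simp only [Complex.sq_norm, normSq_apply, sub_re, sub_im, add_re, add_im, one_re, one_im, mul_re,
    mul_im, ofReal_re, ofReal_im]
  linear_combination (b ^ 2 + b) * hunit

theorem one_sub_le_norm_one_sub_mul {ζ : ℂ} (hζ : ‖ζ‖ = 1) {b : ℝ} (hb : 0 ≤ b) :
    1 - b ≤ ‖1 - b * ζ‖ := by
  simpa [hζ, abs_of_nonneg hb] using norm_sub_norm_le (1 : ℂ) (b * ζ)

end Complex

open Complex

/-- `λ(ζ)` in closed form, with `b = a⁻¹` and `m = n / 2`. -/
noncomputable def leeEigenvalue (b : ℝ) (m : ℕ) (ζ : ℂ) : ℝ :=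
  (if ζ ^ m = 1 then 1 - b ^ m else 1 + b ^ m) * (1 - b ^ 2) / ‖1 - b * ζ‖ ^ 2

section leeEigenvalue

variable {b : ℝ} {m : ℕ} {ζ : ℂ}

theorem sum_pow_min_mul_pow_eq_leeEigenvalue (hb0 : 0 ≤ b) (hb1 : b < 1) (hm : m ≠ 0)
    (hζ : ζ ^ (2 * m) = 1) :
    ∑ g ∈ range (2 * m), (b : ℂ) ^ min g (2 * m - g) * ζ ^ g = leeEigenvalue b m ζ := by
  have hnorm : ‖ζ‖ = 1 := norm_eq_one_of_pow_eq_one hζ (by omega)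
  have hden : ((‖1 - b * ζ‖ ^ 2 : ℝ) : ℂ) ≠ 0 := by
    have := one_sub_le_norm_one_sub_mul hnorm hb0
    exact_mod_cast (pow_pos (show 0 < ‖1 - b * ζ‖ by linarith) 2).ne'
  have hsign : (1 : ℂ) - b ^ m * ζ ^ m =
      ((if ζ ^ m = 1 then 1 - b ^ m else 1 + b ^ m : ℝ) : ℂ) := by
    have hsq : ζ ^ m * ζ ^ m = 1 := by rw [← pow_add, ← two_mul, hζ]
    rcases mul_self_eq_one_iff.mp hsq with h | h <;> norm_num [h]
  rw [leeEigenvalue, ofReal_div, ofReal_mul, ← hsign, eq_div_iff hden,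
    ← one_sub_mul_mul_one_sub_mul_inv hnorm, sum_pow_min_mul_pow_mul_eq _ hζ]
  push_cast
  ring

theorem leeEigenvalue_pos (hb0 : 0 ≤ b) (hb1 : b < 1) (hm : m ≠ 0) (hζ : ‖ζ‖ = 1) :
    0 < leeEigenvalue b m ζ := by
  have hbm : b ^ m < 1 := pow_lt_one₀ hb0 hb1 hm
  have hden := one_sub_le_norm_one_sub_mul hζ hb0
  unfold leeEigenvalue
  split_ifs <;> exact div_pos (mul_pos (by linarith [pow_nonneg hb0 m]) (by nlinarith))
    (pow_pos (by linarith) 2)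

theorem leeEigenvalue_neg_one_lt (hb0 : 0 < b) (hb1 : b < 1) (hm : m ≠ 0) (hme : Even m)
    (hζ : ‖ζ‖ = 1) (hζ1 : ζ ≠ -1) :
    leeEigenvalue b m (-1) < leeEigenvalue b m ζ := by
  have hnum : 0 < (1 - b ^ m) * (1 - b ^ 2) :=
    mul_pos (by linarith [pow_lt_one₀ hb0.le hb1 hm]) (by nlinarith)
  have hden_pos : 0 < ‖1 - b * ζ‖ ^ 2 := by
    have := one_sub_le_norm_one_sub_mul hζ hb0.le
    exact pow_pos (by linarith) 2
  have hden_lt : ‖1 - b * ζ‖ ^ 2 < (1 + b) ^ 2 := by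
    have h1ζ : 0 < ‖1 + ζ‖ := norm_pos_iff.mpr fun h => hζ1 (eq_neg_of_add_eq_zero_right h)
    linarith [norm_one_sub_mul_sq_add hζ b, mul_pos hb0 (pow_pos h1ζ 2)]
  have hsign : 1 - b ^ m ≤ if ζ ^ m = 1 then 1 - b ^ m else 1 + b ^ m := by
    split_ifs <;> linarith [pow_pos hb0 m]
  have hneg_one : leeEigenvalue b m (-1) = (1 - b ^ m) * (1 - b ^ 2) / (1 + b) ^ 2 := by
    have : (1 : ℂ) - b * -1 = ((1 + b : ℝ) : ℂ) := by push_cast; ring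
    rw [leeEigenvalue, hme.neg_one_pow, if_pos rfl, this, norm_real,
      Real.norm_of_nonneg (by linarith)]
  calc leeEigenvalue b m (-1) = (1 - b ^ m) * (1 - b ^ 2) / (1 + b) ^ 2 := hneg_one
    _ < (1 - b ^ m) * (1 - b ^ 2) / ‖1 - b * ζ‖ ^ 2 :=
      div_lt_div_of_pos_left hnum hden_pos hden_lt
    _ ≤ leeEigenvalue b m ζ :=
      div_le_div_of_nonneg_right (mul_le_mul_of_nonneg_right hsign (by nlinarith)) hden_pos.le

end leeEigenvalue

theorem one_dim_factor_min (a : ℝ) (ha : 1 < a) (n : ℕ) (hn : 0 < n) (h4 : 4 ∣ n) :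
    let lam : ℂ → ℂ := fun ζ => ∑ g ∈ Finset.range n,
      ((a ^ (-((min g (n - g) : ℕ) : ℤ)) : ℝ) : ℂ) * ζ ^ g
    (∀ ζ : ℂ, ζ ^ n = 1 →
        lam ζ = ((if ζ ^ (n / 2) = 1 then ((1 - a ^ (-((n / 2 : ℕ) : ℤ)) : ℝ) : ℂ)
            else ((1 + a ^ (-((n / 2 : ℕ) : ℤ)) : ℝ) : ℂ)) *
          (((1 - a ^ (-2 : ℤ)) : ℝ) : ℂ)) / (‖1 - (a : ℂ)⁻¹ * ζ‖ ^ 2 : ℝ)) ∧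
    (∀ ζ : ℂ, ζ ^ n = 1 → 0 < (lam ζ).re) ∧
    (∀ ζ : ℂ, ζ ^ n = 1 → ζ ≠ -1 → (lam (-1)).re < (lam ζ).re) := by
  intro lam
  obtain ⟨m, rfl⟩ : ∃ m, n = 2 * m := ⟨n / 2, by omega⟩
  have hm : m ≠ 0 := by omega
  have hme : Even m := by
    obtain ⟨k, hk⟩ := h4
    exact ⟨k, by omega⟩
  have hb0 : 0 < a⁻¹ := inv_pos.2 (by linarith)
  have hb1 : a⁻¹ < 1 := inv_lt_one_of_one_lt₀ ha
  have hlam : ∀ ζ : ℂ, ζ ^ (2 * m) = 1 → lam ζ = leeEigenvalue a⁻¹ m ζ := fun ζ hζ => by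
    rw [← sum_pow_min_mul_pow_eq_leeEigenvalue hb0.le hb1 hm hζ]
    refine sum_congr rfl fun g _ => ?_
    rw [zpow_neg, zpow_natCast, ← inv_pow, ofReal_pow, ofReal_inv]
  have hnorm : ∀ ζ : ℂ, ζ ^ (2 * m) = 1 → ‖ζ‖ = 1 := fun ζ hζ =>
    norm_eq_one_of_pow_eq_one hζ (by omega)
  refine ⟨fun ζ hζ => ?_, fun ζ hζ => ?_, fun ζ hζ hζ1 => ?_⟩
  · rw [hlam ζ hζ, leeEigenvalue, Nat.mul_div_cancel_left m two_pos]
    split_ifs <;> simp [zpow_neg, inv_pow]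
  · rw [hlam ζ hζ, ofReal_re]
    exact leeEigenvalue_pos hb0.le hb1 hm (hnorm ζ hζ)
  · rw [hlam ζ hζ, hlam (-1) (even_two_mul m).neg_one_pow, ofReal_re, ofReal_re]
    exact leeEigenvalue_neg_one_lt hb0 hb1 hm hme (hnorm ζ hζ) hζ1
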